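/- arXiv:2402.07052 — 8 statements merged into one kernel-verified Lean document; each statement's English description precedes it below -/
import Mathlib

section
/- For all t ≥ 0, erf(t) ≤ √(1 − exp(−4t²/π)). -/
open Real

noncomputable def erf (t : ℝ) : ℝ := (2 / Real.sqrt π) * ∫ z in (0:ℝ)..t, Real.exp (-z^2)

/-!
`π · erf t ^ 2 = (∫_{-t}^t exp (-x²) dx)²` is the integral of `exp (-‖z‖²)` over the square
`[-t, t]²` in `ℂ`. Compare it with the disk of the same area, of radius `R = 2t/√π`: the integrand
is `≤ exp (-R²)` on the part of the square outside the disk and `≥ exp (-R²)` on the part of the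
disk outside the square, and these two parts have equal area, so the disk carries at least as much
mass. In polar coordinates the disk integral is `π (1 - exp (-R²))`.
-/

open MeasureTheory Set Metric

theorem setIntegral_le_setIntegral_of_measure_eq {α : Type*} [MeasurableSpace α] {μ : Measure α}
    {f : α → ℝ} {s t : Set α} {c : ℝ} (hs : MeasurableSet s) (ht : MeasurableSet t)
    (hst : μ s = μ t) (hs_fin : μ s ≠ ⊤) (hfs : IntegrableOn f s μ) (hft : IntegrableOn f t μ)
    (hle : ∀ x ∈ s \ t, f x ≤ c) (hge : ∀ x ∈ t \ s, c ≤ f x) :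
    ∫ x in s, f x ∂μ ≤ ∫ x in t, f x ∂μ := by
  have ht_fin : μ t ≠ ⊤ := hst ▸ hs_fin
  have hsdiff : μ (s \ t) = μ (t \ s) :=
    measure_sdiff_symm hs.nullMeasurableSet ht.nullMeasurableSet hst
      (measure_ne_top_of_subset inter_subset_left hs_fin)
  rw [← integral_inter_add_sdiff ht hfs, ← integral_inter_add_sdiff hs hft, inter_comm]
  refine add_le_add_right ?_ _
  calc ∫ x in s \ t, f x ∂μ ≤ ∫ _ in s \ t, c ∂μ :=
        setIntegral_mono_on (hfs.mono_set sdiff_subset)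
          (integrableOn_const (measure_ne_top_of_subset sdiff_subset hs_fin)) (hs.diff ht) hle
    _ = ∫ _ in t \ s, c ∂μ := by simp only [setIntegral_const, measureReal_def, hsdiff]
    _ ≤ ∫ x in t \ s, f x ∂μ :=
        setIntegral_mono_on (integrableOn_const (measure_ne_top_of_subset sdiff_subset ht_fin))
          (hft.mono_set sdiff_subset) (ht.diff hs) hge

theorem intervalIntegral.integral_neg_self_of_even {E : Type*} [NormedAddCommGroup E]
    [NormedSpace ℝ E] {f : ℝ → E} {a : ℝ} (hf : ∀ x, f (-x) = f x)
    (hint : IntervalIntegrable f volume 0 a) :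
    ∫ x in -a..a, f x = 2 • ∫ x in 0..a, f x := by
  have hint_neg : IntervalIntegrable f volume (-a) 0 := by
    simpa [hf] using ((IntervalIntegrable.iff_comp_neg).mp hint).symm
  have hneg : ∫ x in -a..0, f x = ∫ x in 0..a, f x := by
    simpa [hf] using intervalIntegral.integral_comp_neg (a := -a) (b := 0) f
  rw [← intervalIntegral.integral_add_adjacent_intervals hint_neg hint, hneg, two_smul]

theorem integral_ball_fun_norm {E F : Type*} [NormedAddCommGroup E] [NormedSpace ℝ E]
    [MeasurableSpace E] [BorelSpace E] [FiniteDimensional ℝ E] [Nontrivial E]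
    [NormedAddCommGroup F] [NormedSpace ℝ F] (μ : Measure E) [μ.IsAddHaarMeasure]
    (f : ℝ → F) (r : ℝ) :
    ∫ x in ball 0 r, f ‖x‖ ∂μ = Module.finrank ℝ E • μ.real (ball 0 1) •
      ∫ y in Ioo 0 r, y ^ (Module.finrank ℝ E - 1) • f y := by
  have hind : (ball (0 : E) r).indicator (fun x => f ‖x‖) = fun x => (Iio r).indicator f ‖x‖ := by
    ext x; simp [indicator]
  rw [← integral_indicator measurableSet_ball, hind, integral_fun_norm_addHaar,
    ← Ioi_inter_Iio, ← setIntegral_indicator measurableSet_Iio]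
  simp_rw [indicator_smul_apply]

theorem integral_Ioo_mul_exp_neg_sq {r : ℝ} (hr : 0 ≤ r) :
    ∫ y in Ioo 0 r, y * exp (-y ^ 2) = (1 - exp (-r ^ 2)) / 2 := by
  have hderiv (y : ℝ) : HasDerivAt (fun y => -exp (-y ^ 2) / 2) (y * exp (-y ^ 2)) y := by
    have hsq : HasDerivAt (fun y : ℝ => -y ^ 2) (-(2 * y)) y := by
      simpa using (hasDerivAt_pow 2 y).fun_neg
    exact (hsq.exp.fun_neg.div_const 2).congr_deriv (by ring)
  rw [← integral_Ioc_eq_integral_Ioo, ← intervalIntegral.integral_of_le hr,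
    intervalIntegral.integral_eq_sub_of_hasDerivAt (fun y _ => hderiv y)
      (by apply Continuous.intervalIntegrable; fun_prop)]
  simp only [ne_eq, OfNat.ofNat_ne_zero, not_false_eq_true, zero_pow, neg_zero, exp_zero]
  ring

namespace Complex

theorem volume_reProdIm (s t : Set ℝ) : volume (s ×ℂ t) = volume s * volume t := by
  rw [← Measure.prod_prod, ← Measure.volume_eq_prod,
    ← volume_preserving_equiv_real_prod.measure_preimage_equiv]
  rfl

theorem setIntegral_reProdIm_mul (f g : ℝ → ℝ) (s t : Set ℝ) :
    ∫ z in s ×ℂ t, f z.re * g z.im = (∫ x in s, f x) * ∫ y in t, g y := by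
  rw [← setIntegral_prod_mul, ← Measure.volume_eq_prod,
    ← volume_preserving_equiv_real_prod.setIntegral_preimage_emb
      measurableEquivRealProd.measurableEmbedding]
  rfl

theorem integral_ball_fun_norm {F : Type*} [NormedAddCommGroup F] [NormedSpace ℝ F]
    (f : ℝ → F) (r : ℝ) :
    ∫ z in ball (0 : ℂ) r, f ‖z‖ = (2 * π) • ∫ y in Ioo 0 r, y • f y := by
  rw [_root_.integral_ball_fun_norm, finrank_real_complex, measureReal_def, volume_ball]
  simp only [ENNReal.ofReal_one, one_pow, one_mul, ENNReal.coe_toReal, NNReal.coe_real_pi,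
    Nat.add_one_sub_one, pow_one]
  rw [← Nat.cast_smul_eq_nsmul ℝ, smul_smul, Nat.cast_ofNat]

theorem setIntegral_reProdIm_exp_neg_sq_norm (s t : Set ℝ) :
    ∫ z in s ×ℂ t, Real.exp (-‖z‖ ^ 2) =
      (∫ x in s, Real.exp (-x ^ 2)) * ∫ y in t, Real.exp (-y ^ 2) := by
  rw [← setIntegral_reProdIm_mul]
  congr with z
  rw [← Real.exp_add, Complex.sq_norm, normSq_apply]
  ring_nf

theorem integral_ball_exp_neg_sq_norm {r : ℝ} (hr : 0 ≤ r) :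
    ∫ z in ball (0 : ℂ) r, Real.exp (-‖z‖ ^ 2) = π * (1 - Real.exp (-r ^ 2)) := by
  rw [integral_ball_fun_norm (fun y => Real.exp (-y ^ 2))]
  simp only [smul_eq_mul]
  rw [integral_Ioo_mul_exp_neg_sq hr]
  ring

theorem integrableOn_exp_neg_sq_norm {s : Set ℂ} (hs : volume s ≠ ⊤) :
    IntegrableOn (fun z : ℂ => Real.exp (-‖z‖ ^ 2)) s :=
  Measure.integrableOn_of_bounded hs (by fun_prop) (M := 1) (ae_of_all _ fun z => by
    rw [norm_of_nonneg (Real.exp_pos _).le, Real.exp_le_one_iff, neg_nonpos]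
    positivity)

end Complex

theorem sq_integral_exp_neg_sq_le {t : ℝ} (ht : 0 ≤ t) :
    (∫ x in -t..t, exp (-x ^ 2)) ^ 2 ≤ π * (1 - exp (-4 * t ^ 2 / π)) := by
  set R := 2 * t / √π
  set Q := Ioc (-t) t ×ℂ Ioc (-t) t
  have hR0 : 0 ≤ R := by positivity
  have hR : R ^ 2 = 4 * t ^ 2 / π := by rw [div_pow, sq_sqrt pi_pos.le]; ring
  have hvol : volume Q = volume (ball (0 : ℂ) R) := by
    rw [Complex.volume_reProdIm, Real.volume_Ioc, Complex.volume_ball, ← sq,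
      ← ENNReal.ofReal_pow hR0, ← ENNReal.ofReal_pow (by linarith), ← ENNReal.ofReal_coe_nnreal,
      ← ENNReal.ofReal_mul (by positivity), NNReal.coe_real_pi, hR]
    congr 1
    field_simp
    ring
  have hQ_fin : volume Q ≠ ⊤ := hvol ▸ measure_ball_lt_top.ne
  calc (∫ x in -t..t, exp (-x ^ 2)) ^ 2 = ∫ z in Q, exp (-‖z‖ ^ 2) := by
        rw [Complex.setIntegral_reProdIm_exp_neg_sq_norm,
          intervalIntegral.integral_of_le (by linarith), sq]
    _ ≤ ∫ z in ball (0 : ℂ) R, exp (-‖z‖ ^ 2) :=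
      setIntegral_le_setIntegral_of_measure_eq (c := exp (-R ^ 2))
        ((measurableSet_Ioc.preimage Complex.measurable_re).inter
          (measurableSet_Ioc.preimage Complex.measurable_im))
        measurableSet_ball hvol hQ_fin (Complex.integrableOn_exp_neg_sq_norm hQ_fin)
        (Complex.integrableOn_exp_neg_sq_norm (hvol ▸ hQ_fin))
        (fun z hz => by
          have : R ≤ ‖z‖ := by simpa using hz.2
          gcongr)
        (fun z hz => by
          have : ‖z‖ < R := by simpa using hz.1
          gcongr)
    _ = π * (1 - exp (-4 * t ^ 2 / π)) := by
      rw [Complex.integral_ball_exp_neg_sq_norm hR0, hR, neg_mul, neg_div]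

theorem erf_le_sqrt_one_sub_exp (t : ℝ) (ht : 0 ≤ t) :
    erf t ≤ Real.sqrt (1 - Real.exp (-4 * t^2 / π)) := by
  have heven : ∫ x in -t..t, exp (-x ^ 2) = 2 * ∫ x in 0..t, exp (-x ^ 2) := by
    rw [intervalIntegral.integral_neg_self_of_even (by simp)
      (by apply Continuous.intervalIntegrable; fun_prop), nsmul_eq_mul, Nat.cast_ofNat]
  refine le_sqrt_of_sq_le ?_
  calc erf t ^ 2 = (∫ x in -t..t, exp (-x ^ 2)) ^ 2 / π := by
        rw [erf, heven, mul_pow, mul_pow, div_pow, sq_sqrt pi_pos.le]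
        ring
    _ ≤ π * (1 - exp (-4 * t ^ 2 / π)) / π := by gcongr; exact sq_integral_exp_neg_sq_le ht
    _ = 1 - exp (-4 * t ^ 2 / π) := by field_simp
end

section
/- Define h(t; σ) := 2(1 − e^{−t})/(2 + t²/σ²) for t ≥ 0. If 0 < σ ≤ 1/(2√2), then sup_{t ≥ 0} h(t; σ) ≤ 0.72·(1 − e^{−√2 σ}). -/
/-!
Put `s = √2 σ ≤ 1/2`. Since `1 - e^{-t} ≤ t` and, by AM-GM, `2 + t²/σ² ≥ 2√2 t/σ`, every value of
`h` is at most `σ/√2 = s/2`. On the other side `e^{-s} ≤ (1 + s/2)⁻²`, which reduces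
`s/2 ≤ 0.72 (1 - e^{-s})` to a polynomial inequality valid for `0 ≤ s ≤ 1/2`.
-/

open Real

lemma two_mul_div_two_add_sq_div_sq_le {σ : ℝ} (hσ : 0 < σ) (t : ℝ) :
    2 * t / (2 + t ^ 2 / σ ^ 2) ≤ √2 * σ / 2 := by
  obtain ⟨u, rfl⟩ : ∃ u, t = u * σ := ⟨t / σ, (div_mul_cancel₀ t hσ.ne').symm⟩
  rw [mul_pow, mul_div_cancel_right₀ _ (pow_ne_zero 2 hσ.ne'),
    div_le_div_iff₀ (by positivity) two_pos]
  have hsquare : √2 * σ * (2 + u ^ 2) - 2 * (u * σ) * 2 = √2 * σ * (u - √2) ^ 2 := by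
    linear_combination (2 * σ * u - √2 * σ) * sq_sqrt (zero_le_two : (0 : ℝ) ≤ 2)
  linarith [mul_nonneg (mul_nonneg (sqrt_nonneg 2) hσ.le) (sq_nonneg (u - √2))]

lemma one_add_half_sq_le_exp {s : ℝ} (hs : -2 ≤ s) : (1 + s / 2) ^ 2 ≤ exp s := by
  calc (1 + s / 2) ^ 2 ≤ exp (s / 2) ^ 2 := by
        gcongr
        · linarith
        · linarith [add_one_le_exp (s / 2)]
    _ = exp s := by rw [← exp_nat_mul]; ring_nf

lemma half_le_mul_one_sub_exp_neg {s : ℝ} (hs₀ : 0 ≤ s) (hs : s ≤ 1 / 2) :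
    s / 2 ≤ 0.72 * (1 - exp (-s)) := by
  have hexp : exp (-s) * (1 + s / 2) ^ 2 ≤ 1 := by
    rw [exp_neg, inv_mul_le_iff₀ (exp_pos s), mul_one]
    exact one_add_half_sq_le_exp (by linarith)
  have hpoly : s / 2 * (1 + s / 2) ^ 2 ≤ 0.72 * ((1 + s / 2) ^ 2 - 1) := by
    nlinarith [mul_nonneg hs₀ (by linarith : (0 : ℝ) ≤ 1 / 2 - s)]
  have hpos : 0 < (1 + s / 2) ^ 2 := by positivity
  refine le_of_mul_le_mul_right ?_ hpos
  linarith

theorem sup_h_le (σ : ℝ) (hσ : 0 < σ) (hσ' : σ ≤ 1 / (2 * Real.sqrt 2)) :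
    ∀ t : ℝ, 0 ≤ t →
      2 * (1 - Real.exp (-t)) / (2 + t^2 / σ^2) ≤
        0.72 * (1 - Real.exp (-(Real.sqrt 2) * σ)) := by
  intro t _
  have hs : √2 * σ ≤ 1 / 2 := by
    rw [le_div_iff₀ (by positivity)] at hσ'
    linarith
  rw [neg_mul]
  calc 2 * (1 - exp (-t)) / (2 + t ^ 2 / σ ^ 2) ≤ 2 * t / (2 + t ^ 2 / σ ^ 2) := by
        gcongr
        linarith [one_sub_le_exp_neg t]
    _ ≤ √2 * σ / 2 := two_mul_div_two_add_sq_div_sq_le hσ t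
    _ ≤ 0.72 * (1 - exp (-(√2 * σ))) := half_le_mul_one_sub_exp_neg (by positivity) hs
end

section
/- Let f⁽¹⁾ ≥ f⁽²⁾ > 0 and let Z be a random variable with mean 0 and variance 2. Let j* = 1 if Z ≤ (1/σ)·log(f⁽¹⁾/f⁽²⁾) and j* = 2 otherwise, for σ > 0. Then E[f^{(j*)}] ≥ f⁽¹⁾ − (f⁽¹⁾ − f⁽²⁾)·2/(2 + (1/σ²)·log²(f⁽¹⁾/f⁽²⁾)). -/
open MeasureTheory ProbabilityTheory Real

theorem greedy_selection_lower_bound {Ω : Type*} [MeasureSpace Ω]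
    [IsProbabilityMeasure (ℙ : Measure Ω)]
    (Z : Ω → ℝ) (hZ : MemLp Z 2) (hmean : ∫ ω, Z ω = 0)
    (hvar : variance Z ℙ = 2)
    (f₁ f₂ σ : ℝ) (hf : f₁ ≥ f₂) (hf₂ : 0 < f₂) (hσ : 0 < σ) :
    f₁ - (f₁ - f₂) * (2 / (2 + (1 / σ^2) * (Real.log (f₁ / f₂))^2)) ≤
      ∫ ω, (if Z ω ≤ (1 / σ) * Real.log (f₁ / f₂) then f₁ else f₂) := by
  set t : ℝ := (1 / σ) * Real.log (f₁ / f₂) with ht_def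
  have hlog : 0 ≤ Real.log (f₁ / f₂) :=
    Real.log_nonneg ((one_le_div hf₂).2 hf)
  have ht : 0 ≤ t := mul_nonneg (by positivity) hlog
  have hZint : Integrable Z := hZ.integrable one_le_two
  have hZsq : Integrable (fun ω => Z ω ^ 2) := hZ.integrable_sq
  have h2 : ∫ ω, Z ω ^ 2 = 2 := by
    have h := variance_eq_sub hZ
    simp only [hvar, hmean, Pi.pow_apply] at h
    linarith
  -- Cantelli
  have cantelli : (ℙ {ω | t < Z ω}).toReal ≤ 2 / (2 + t ^ 2) := by
    rcases eq_or_lt_of_le ht with h0 | h0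
    · simp only [← h0]
      norm_num
      calc (ℙ {ω | 0 < Z ω}).toReal ≤ (ℙ Set.univ).toReal := by
            exact ENNReal.toReal_mono (measure_ne_top _ _) (measure_mono (Set.subset_univ _))
        _ = 1 := by simp
    · set u : ℝ := 2 / t with hu_def
      have hu : 0 < u := by positivity
      have hint : Integrable (fun ω => (Z ω + u) ^ 2) := by
        have : (fun ω => (Z ω + u) ^ 2) = fun ω => Z ω ^ 2 + (2 * u) * Z ω + u ^ 2 := by
          funext ω; ring
        rw [this]
        exact (hZsq.add (hZint.const_mul _)).add (integrable_const _)
      have hI : ∫ ω, (Z ω + u) ^ 2 = 2 + u ^ 2 := by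
        have : (fun ω => (Z ω + u) ^ 2) = fun ω => Z ω ^ 2 + (2 * u) * Z ω + u ^ 2 := by
          funext ω; ring
        have hA : Integrable (fun ω => Z ω ^ 2 + 2 * u * Z ω) := by
          exact hZsq.add (hZint.const_mul (2 * u))
        rw [this, integral_add hA (integrable_const _),
          integral_add hZsq (hZint.const_mul _), integral_const_mul, hmean, h2]
        simp
      have hsub : {ω | t < Z ω} ⊆ {ω | (t + u) ^ 2 ≤ (Z ω + u) ^ 2} := by
        intro ω hω
        have h1 : t + u ≤ Z ω + u := by simp only [Set.mem_setOf_eq] at hω; linarith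
        exact pow_le_pow_left₀ (by positivity) h1 2
      have markov := mul_meas_ge_le_integral_of_nonneg
        (μ := (ℙ : Measure Ω)) (f := fun ω => (Z ω + u) ^ 2)
        (ae_of_all _ fun ω => sq_nonneg _) hint ((t + u) ^ 2)
      rw [hI] at markov
      have hmono : (ℙ {ω | t < Z ω}).toReal ≤ (ℙ {x | (t + u) ^ 2 ≤ (Z x + u) ^ 2}).toReal :=
        ENNReal.toReal_mono (measure_ne_top _ _) (measure_mono hsub)
      have htu : 0 < (t + u) ^ 2 := by positivity
      have hkey : (ℙ {x | (t + u) ^ 2 ≤ (Z x + u) ^ 2}).toReal ≤ (2 + u ^ 2) / (t + u) ^ 2 := by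
        rw [le_div_iff₀ htu]
        rw [measureReal_def] at markov
        linarith [markov]
      have heq : (2 + u ^ 2) / (t + u) ^ 2 = 2 / (2 + t ^ 2) := by
        rw [hu_def]
        field_simp
        ring
      linarith
  -- rewrite the integral using the measurable modification
  obtain ⟨Z', hZ'm, hae⟩ := hZ.aestronglyMeasurable
  have hZ'meas : Measurable Z' := hZ'm.measurable
  have hsetae : {ω | t < Z ω} =ᵐ[ℙ] {ω | t < Z' ω} := by
    filter_upwards [hae] with ω h
    change (t < Z ω) = (t < Z' ω)
    rw [h]
  have hmeq : ℙ {ω | t < Z' ω} = ℙ {ω | t < Z ω} := (measure_congr hsetae).symm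
  set s : Set Ω := {ω | Z' ω ≤ t} with hs_def
  have hsm : MeasurableSet s := measurableSet_le hZ'meas measurable_const
  have hgeq : (fun ω => if Z ω ≤ t then f₁ else f₂)
      =ᵐ[ℙ] fun ω => f₂ + (f₁ - f₂) * s.indicator (fun _ => 1) ω := by
    filter_upwards [hae] with ω h
    simp only [h, hs_def, Set.indicator_apply, Set.mem_setOf_eq]
    by_cases hle : Z' ω ≤ t
    · simp only [if_pos hle]; ring
    · simp only [if_neg hle]; ring
  rw [integral_congr_ae hgeq, integral_add (integrable_const _)
    (((integrable_indicator_iff hsm).2 (integrableOn_const (measure_ne_top _ _))).const_mul _),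
    integral_const, integral_const_mul, integral_indicator hsm]
  simp only [measure_univ, ENNReal.toReal_one, smul_eq_mul, one_mul, integral_const,
    smul_eq_mul, mul_one]
  have hcompl : (ℙ s).toReal = 1 - (ℙ {ω | t < Z ω}).toReal := by
    have hsc : sᶜ = {ω | t < Z' ω} := by
      ext ω; simp [hs_def, not_le]
    have h1 : (ℙ sᶜ).toReal = 1 - (ℙ s).toReal := by
      rw [measure_compl hsm (measure_ne_top _ _), measure_univ,
        ENNReal.toReal_sub_of_le prob_le_one (by simp)]
      simp
    rw [hsc, hmeq] at h1
    linarith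
  rw [measureReal_def, measureReal_def, Measure.restrict_apply_univ, hcompl, measure_univ,
    ENNReal.toReal_one]
  have ht2 : (1 / σ ^ 2) * (Real.log (f₁ / f₂)) ^ 2 = t ^ 2 := by
    rw [ht_def]; ring
  rw [ht2]
  have hfd : 0 ≤ f₁ - f₂ := by linarith
  nlinarith [mul_le_mul_of_nonneg_left cantelli hfd]
end

section
/- Let f⁽¹⁾ ≥ f⁽²⁾ > 0, σ ≤ 1/(2√2), and Z a random variable with mean 0 and variance 2. With j* defined as the argmax of the noisy values f^{(j)}·exp(μ + σζ^{(j)}) (equivalently j* = 1 iff σZ ≤ log(f⁽¹⁾/f⁽²⁾)), one has E[f^{(j*)}] ≥ (1 − 0.72·(1 − e^{−√2 σ}))·f⁽¹⁾ = (1 − 0.72·(1 − e^{−√2 σ}))·max(f⁽¹⁾, f⁽²⁾). -/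
open MeasureTheory ProbabilityTheory Real

private lemma exp_neg_cubic_bound {x : ℝ} (h0 : 0 ≤ x) (h1 : x ≤ 1) :
    Real.exp (-x) ≤ 1 - x + x ^ 2 / 2 + 2 * x ^ 3 / 9 := by
  have hb := Real.exp_bound (x := -x) (by rwa [abs_neg, abs_of_nonneg h0]) (n := 3) (by norm_num)
  rw [Finset.sum_range_succ, Finset.sum_range_succ, Finset.sum_range_succ,
    Finset.sum_range_zero, abs_neg, abs_of_nonneg h0] at hb
  have hb2 := (abs_le.mp hb).2
  norm_num [Nat.factorial] at hb2 ⊢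
  nlinarith [hb2]

private lemma key_scalar {x : ℝ} (h0 : 0 ≤ x) (h1 : x ≤ 1 / 2) :
    x ≤ 1.44 * (1 - Real.exp (-x)) := by
  have hb := exp_neg_cubic_bound h0 (by linarith)
  nlinarith [sq_nonneg x, mul_nonneg h0 h0, mul_nonneg (mul_nonneg h0 h0) h0]

/-- Cantelli's inequality for a mean-zero random variable with second moment 2. -/
private lemma cantelli {Ω : Type*} [MeasureSpace Ω] [IsProbabilityMeasure (ℙ : Measure Ω)]
    (W : Ω → ℝ) (hW : MemLp W 2) (hm : ∫ ω, W ω = 0) (hv : ∫ ω, (W ω) ^ 2 = 2)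
    {a : ℝ} (ha : 0 < a) :
    (ℙ {ω | a < W ω}).toReal ≤ 2 / (2 + a ^ 2) := by
  set l : ℝ := 2 / a with hl
  have hl0 : 0 < l := by positivity
  have hWl : MemLp (fun ω => W ω + l) 2 := hW.add (memLp_const l)
  have hg_int : Integrable (fun ω => (W ω + l) ^ 2) := hWl.integrable_sq
  have hint_W : Integrable W := hW.integrable one_le_two
  have hint_W2 : Integrable (fun ω => W ω ^ 2) := hW.integrable_sq
  have hi1 : ∫ ω, (2 * l * W ω + l ^ 2) = 2 * l * (∫ ω, W ω) + l ^ 2 := by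
    have e : ∫ ω, (2 * l * W ω + l ^ 2)
        = (∫ ω, 2 * l * W ω) + ∫ (_ : Ω), l ^ 2 :=
      integral_add (hint_W.const_mul _) (integrable_const _)
    rw [e, integral_const_mul, integral_const]
    simp
  have hg_val : ∫ ω, (W ω + l) ^ 2 = 2 + l ^ 2 := by
    have e0 : ∫ ω, (W ω + l) ^ 2 = ∫ ω, (W ω ^ 2 + (2 * l * W ω + l ^ 2)) := by
      congr 1; funext ω; ring
    have e1 : ∫ ω, (W ω ^ 2 + (2 * l * W ω + l ^ 2))
        = (∫ ω, W ω ^ 2) + ∫ ω, (2 * l * W ω + l ^ 2) :=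
      integral_add hint_W2 ((hint_W.const_mul _).add (integrable_const _))
    rw [e0, e1, hi1, hm, hv]
    ring
  have hsub : {ω | a < W ω} ⊆ {ω | (a + l) ^ 2 ≤ (W ω + l) ^ 2} := by
    intro ω hω
    have h1 : a + l ≤ W ω + l := by simp only [Set.mem_setOf_eq] at hω; linarith
    exact pow_le_pow_left₀ (by positivity) h1 2
  have hmarkov := mul_meas_ge_le_integral_of_nonneg
    (Filter.Eventually.of_forall fun ω => sq_nonneg (W ω + l)) hg_int ((a + l) ^ 2)
  have hmono : (ℙ {ω | a < W ω}).toReal ≤ (ℙ {ω | (a + l) ^ 2 ≤ (W ω + l) ^ 2}).toReal :=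
    ENNReal.toReal_mono (measure_ne_top _ _) (measure_mono hsub)
  have hal : (0:ℝ) < (a + l) ^ 2 := by positivity
  have hfin : (a + l) ^ 2 * (ℙ {ω | a < W ω}).toReal ≤ 2 + l ^ 2 := by
    calc (a + l) ^ 2 * (ℙ {ω | a < W ω}).toReal
        ≤ (a + l) ^ 2 * (ℙ {ω | (a + l) ^ 2 ≤ (W ω + l) ^ 2}).toReal :=
          mul_le_mul_of_nonneg_left hmono (le_of_lt hal)
      _ ≤ ∫ ω, (W ω + l) ^ 2 := hmarkov
      _ = 2 + l ^ 2 := hg_val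
  have heq : (a + l) ^ 2 * (2 / (2 + a ^ 2)) = 2 + l ^ 2 := by
    rw [hl]
    field_simp
    ring
  rw [← mul_le_mul_iff_right₀ hal, heq]
  exact hfin

private lemma final_chain {f₁ f₂ σ t s2 h p : ℝ}
    (hf₁ : 0 < f₁) (hσ : 0 < σ) (htpos : 0 < t)
    (hs2 : s2 ^ 2 = 2) (hs2pos : 0 < s2)
    (hh0 : 0 ≤ h) (hσh : σ ≤ s2 * h)
    (hp0 : 0 ≤ p) (hfrac : p ≤ 2 * σ ^ 2 / (2 * σ ^ 2 + t ^ 2))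
    (hf₂eq : f₂ = f₁ * Real.exp (-t)) :
    (f₁ - f₂) * p ≤ h * f₁ := by
  have hden : 0 < 2 * σ ^ 2 + t ^ 2 := by positivity
  have hexpt : 1 - Real.exp (-t) ≤ t := by
    have := Real.add_one_le_exp (-t); linarith
  have hexpt0 : 0 ≤ 1 - Real.exp (-t) := by
    have : Real.exp (-t) ≤ 1 := Real.exp_le_one_iff.mpr (by linarith)
    linarith
  have hamgm : 2 * s2 * σ * t ≤ 2 * σ ^ 2 + t ^ 2 := by
    nlinarith [sq_nonneg (s2 * σ - t)]
  have hmain : (1 - Real.exp (-t)) * (2 * σ ^ 2) ≤ h * (2 * σ ^ 2 + t ^ 2) := by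
    have h1 : (1 - Real.exp (-t)) * (2 * σ ^ 2) ≤ t * (2 * σ ^ 2) := by nlinarith
    have h2 : t * (2 * σ ^ 2) ≤ h * (2 * s2 * σ * t) := by
      have hm := mul_le_mul_of_nonneg_left hσh (by positivity : (0:ℝ) ≤ 2 * σ * t)
      nlinarith [hm]
    have h3 : h * (2 * s2 * σ * t) ≤ h * (2 * σ ^ 2 + t ^ 2) :=
      mul_le_mul_of_nonneg_left hamgm hh0
    linarith
  calc (f₁ - f₂) * p = f₁ * (1 - Real.exp (-t)) * p := by rw [hf₂eq]; ring
    _ ≤ f₁ * (1 - Real.exp (-t)) * (2 * σ ^ 2 / (2 * σ ^ 2 + t ^ 2)) :=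
        mul_le_mul_of_nonneg_left hfrac (by positivity)
    _ ≤ h * f₁ := by
        rw [mul_div_assoc', div_le_iff₀ hden]
        nlinarith [hmain, hf₁.le]

theorem greedy_selection_noise_bound {Ω : Type*} [MeasureSpace Ω]
    [IsProbabilityMeasure (ℙ : Measure Ω)]
    (Z : Ω → ℝ) (hZ : MemLp Z 2) (hmean : ∫ ω, Z ω = 0)
    (hvar : variance Z ℙ = 2)
    (f₁ f₂ σ : ℝ) (hf : f₁ ≥ f₂) (hf₂ : 0 < f₂) (hσ : 0 < σ)
    (hσ' : σ ≤ 1 / (2 * Real.sqrt 2)) :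
    (1 - 0.72 * (1 - Real.exp (-(Real.sqrt 2) * σ))) * max f₁ f₂ ≤
      ∫ ω, (if σ * Z ω ≤ Real.log (f₁ / f₂) then f₁ else f₂) := by
  have hf₁ : 0 < f₁ := lt_of_lt_of_le hf₂ hf
  set t : ℝ := Real.log (f₁ / f₂) with ht
  set s2 : ℝ := Real.sqrt 2 with hs2def
  have hs2 : s2 ^ 2 = 2 := Real.sq_sqrt (by norm_num)
  have hs2pos : 0 < s2 := Real.sqrt_pos.mpr (by norm_num)
  set h : ℝ := 0.72 * (1 - Real.exp (-s2 * σ)) with hh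
  have hexple : Real.exp (-s2 * σ) ≤ 1 := Real.exp_le_one_iff.mpr (by nlinarith)
  have hh0 : 0 ≤ h := by rw [hh]; nlinarith
  -- measurable version of Z
  obtain ⟨W, hWsm, hZW⟩ : ∃ W : Ω → ℝ, StronglyMeasurable W ∧ Z =ᵐ[ℙ] W :=
    ⟨hZ.1.mk Z, hZ.1.stronglyMeasurable_mk, hZ.1.ae_eq_mk⟩
  have hWmeas : Measurable W := hWsm.measurable
  have hWmem : MemLp W 2 := hZ.ae_eq hZW
  have hWmean : ∫ ω, W ω = 0 := by rw [← integral_congr_ae hZW]; exact hmean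
  have hZsq : ∫ ω, (Z ω) ^ 2 = 2 := by
    have hv := variance_eq_sub hZ
    rw [hvar] at hv
    simp only [Pi.pow_apply, hmean] at hv
    linarith
  have hWsq : ∫ ω, (W ω) ^ 2 = 2 := by
    have hae : (fun ω => Z ω ^ 2) =ᵐ[ℙ] (fun ω => W ω ^ 2) :=
      hZW.mono fun ω hω => by simp only [hω]
    rw [← integral_congr_ae hae]; exact hZsq
  have ht0 : 0 ≤ t := Real.log_nonneg ((one_le_div hf₂).mpr hf)
  -- rewrite the integral
  set S : Set Ω := {ω | t / σ < W ω} with hSdef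
  have hS : MeasurableSet S := measurableSet_lt measurable_const hWmeas
  set p : ℝ := (ℙ S).toReal with hp
  have hp0 : 0 ≤ p := ENNReal.toReal_nonneg
  have hif : ∫ ω, (if σ * Z ω ≤ t then f₁ else f₂) = f₁ + p * (f₂ - f₁) := by
    have hae : (fun ω => if σ * Z ω ≤ t then f₁ else f₂)
        =ᵐ[ℙ] (fun ω => if σ * W ω ≤ t then f₁ else f₂) :=
      hZW.mono fun ω hω => by simp only [hω]
    have e1 : ∫ ω, (if σ * Z ω ≤ t then f₁ else f₂)
        = ∫ ω, (if σ * W ω ≤ t then f₁ else f₂) := integral_congr_ae hae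
    have e2 : (fun ω => if σ * W ω ≤ t then f₁ else f₂)
        = fun ω => S.indicator (fun _ => f₂ - f₁) ω + f₁ := by
      funext ω
      have hmem : ω ∈ S ↔ ¬ (σ * W ω ≤ t) := by
        simp only [hSdef, Set.mem_setOf_eq, not_le, div_lt_iff₀ hσ, mul_comm]
      by_cases hc : σ * W ω ≤ t
      · rw [if_pos hc, Set.indicator_of_notMem (by rw [hmem]; exact not_not_intro hc)]
        ring
      · rw [if_neg hc, Set.indicator_of_mem (hmem.mpr hc)]
        ring
    rw [e1, e2, integral_add ((integrable_const _).indicator hS) (integrable_const _),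
      integral_indicator_const _ hS, integral_const]
    rw [smul_eq_mul, smul_eq_mul]
    simp only [measureReal_def, measure_univ, ENNReal.toReal_one, one_mul]
    rw [← hp]
    ring
  rw [hif, max_eq_left hf]
  -- reduce to the key estimate
  have hkey : (f₁ - f₂) * p ≤ h * f₁ := by
    rcases eq_or_lt_of_le hf with heq | hlt
    · rw [heq, sub_self, zero_mul]
      positivity
    · -- f₂ < f₁, so t > 0
      have htpos : 0 < t := Real.log_pos ((one_lt_div hf₂).mpr hlt)
      have ha : 0 < t / σ := div_pos htpos hσ
      have hcant : p ≤ 2 / (2 + (t / σ) ^ 2) := cantelli W hWmem hWmean hWsq ha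
      have hden : 0 < 2 * σ ^ 2 + t ^ 2 := by positivity
      have hfrac : p ≤ 2 * σ ^ 2 / (2 * σ ^ 2 + t ^ 2) := by
        have e : 2 / (2 + (t / σ) ^ 2) = 2 * σ ^ 2 / (2 * σ ^ 2 + t ^ 2) := by
          rw [div_eq_div_iff (by positivity) hden.ne']
          field_simp
        rwa [e] at hcant
      have hf₂eq : f₂ = f₁ * Real.exp (-t) := by
        rw [ht, Real.exp_neg, Real.exp_log (by positivity)]
        field_simp
      -- scalar inequality:  σ ≤ s2 * h
      have hx1 : s2 * σ ≤ 1 / 2 := by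
        have hmul := mul_le_mul_of_nonneg_left hσ' (le_of_lt hs2pos)
        have he : s2 * (1 / (2 * s2)) = 1 / 2 := by
          field_simp
        linarith
      have hσh : σ ≤ s2 * h := by
        have hk := key_scalar (x := s2 * σ) (by positivity) hx1
        have hk2 := mul_le_mul_of_nonneg_left hk (le_of_lt hs2pos)
        rw [hh, neg_mul]
        nlinarith [hk2, hs2]
      exact final_chain hf₁ hσ htpos hs2 hs2pos hh0 hσh hp0 hfrac hf₂eq
  nlinarith [hkey]
end

section
/- Let Z₁, …, Z_R be iid N(ε, δ²) random variables with δ > 0 and R ≥ 2. Then P(max_i Z_i ≤ ε + t) ≤ exp(−(R/4)·exp(−2t²/(πδ²))) for all t > 0. -/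
open MeasureTheory ProbabilityTheory Real
open scoped NNReal

namespace MaxGaussAux

open Set Filter
open scoped NNReal

noncomputable def Gfun (u : ℝ) : ℝ := ∫ x in (0:ℝ)..u, Real.exp (-x^2)

lemma contF : Continuous (fun x : ℝ => Real.exp (-x^2)) := by continuity

lemma Gderiv (u : ℝ) : HasDerivAt Gfun (Real.exp (-u^2)) u := by
  refine intervalIntegral.integral_hasDerivAt_right (contF.intervalIntegrable _ _)
    (contF.stronglyMeasurableAtFilter _ _) contF.continuousAt

lemma Gtendsto : Tendsto Gfun atTop (nhds (Real.sqrt π / 2)) := by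
  have hint : IntegrableOn (fun x : ℝ => Real.exp (-x^2)) (Ioi 0) := by
    have := integrable_exp_neg_mul_sq (b := 1) one_pos
    simpa using this.integrableOn
  have := intervalIntegral_tendsto_integral_Ioi (μ := volume) (b := fun u : ℝ => u)
    (f := fun x : ℝ => Real.exp (-x^2)) 0 hint tendsto_id
  have hval : ∫ x in Ioi (0:ℝ), Real.exp (-x^2) = Real.sqrt π / 2 := by
    have := integral_gaussian_Ioi 1
    simpa using this
  rw [hval] at this
  exact this

noncomputable def Dfun (u : ℝ) : ℝ :=
  Real.sqrt π / 2 * (1 - Real.exp (-(4/π) * u^2) / 2) - Gfun u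

lemma Dderiv (u : ℝ) :
    HasDerivAt Dfun (Real.sqrt π / 2 * (4/π * (2*u) * Real.exp (-(4/π) * u^2) / 2)
      - Real.exp (-u^2)) u := by
  have h1 : HasDerivAt (fun u : ℝ => -(4/π) * u^2) (-(4/π) * (2*u)) u := by
    simpa using ((hasDerivAt_pow 2 u).const_mul (-(4/π)))
  have h2 : HasDerivAt (fun u : ℝ => Real.exp (-(4/π) * u^2))
      (Real.exp (-(4/π) * u^2) * (-(4/π) * (2*u))) u := h1.exp
  have h3 : HasDerivAt (fun u : ℝ => Real.sqrt π / 2 * (1 - Real.exp (-(4/π) * u^2) / 2))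
      (Real.sqrt π / 2 * (-(Real.exp (-(4/π) * u^2) * (-(4/π) * (2*u)) / 2))) u :=
    (((h2.div_const 2).const_sub 1).const_mul _)
  have := h3.sub (Gderiv u)
  exact this.congr_deriv (by ring)

lemma key_num (u : ℝ) :
    2*u ≤ Real.sqrt π * (1 + (4-π)/π * u^2 / 2)^2 := by
  have hπ1 : 3.141592 < π := pi_gt_d6
  have hπ2 : π < 3.141593 := pi_lt_d6
  have hπ0 : (0:ℝ) < π := pi_pos
  have hs : Real.sqrt π ^ 2 = π := Real.sq_sqrt pi_pos.le
  have hs1 : 1.772453 < Real.sqrt π := by nlinarith [Real.sqrt_nonneg π]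
  set c : ℝ := (4-π)/π with hcdef
  have hc : 0.2732387 < c := by rw [hcdef]; rw [lt_div_iff₀ hπ0]; nlinarith
  have hc0 : 0 < c := by linarith
  have expand : (1 + c * u^2 / 2)^2 = 1 + c*u^2 + c^2*u^4/4 := by ring
  rw [expand]
  have h1 : Real.sqrt π * (1 + c*u^2 + c^2*u^4/4)
      ≥ 1.772453 * (1 + 0.2732387*u^2 + 0.2732387^2*u^4/4) := by
    have hu2 : (0:ℝ) ≤ u^2 := sq_nonneg u
    have hu4 : (0:ℝ) ≤ u^4 := by positivity
    nlinarith [sq_nonneg u, mul_le_mul_of_nonneg_right (le_of_lt hc) hu2]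
  nlinarith [sq_nonneg (u - 1.553), sq_nonneg (u^2 - 2.41), sq_nonneg (u*(u-1.553)),
    sq_nonneg (u^2 - 1.553*u)]

lemma Dderiv_nonpos (u : ℝ) :
    Real.sqrt π / 2 * (4/π * (2*u) * Real.exp (-(4/π) * u^2) / 2)
      - Real.exp (-u^2) ≤ 0 := by
  have hπ0 : (0:ℝ) < π := pi_pos
  have h4 : π < 4 := by nlinarith [pi_lt_d2]
  have hq : 0 ≤ (4-π)/π * u^2 / 2 := by
    have h0 : 0 ≤ (4-π)/π := div_nonneg (by linarith) hπ0.le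
    positivity
  have hexp : (1 + (4-π)/π * u^2 / 2)^2 ≤ Real.exp ((4-π)/π * u^2) := by
    have h2 : 1 + (4-π)/π * u^2 / 2 ≤ Real.exp ((4-π)/π * u^2 / 2) := by
      have := Real.add_one_le_exp ((4-π)/π * u^2 / 2); linarith
    calc (1 + (4-π)/π * u^2 / 2)^2 ≤ (Real.exp ((4-π)/π * u^2 / 2))^2 :=
          pow_le_pow_left₀ (by linarith) h2 2
      _ = Real.exp ((4-π)/π * u^2) := by
          rw [← Real.exp_nat_mul]; congr 1; ring
  have hsp : 0 < Real.sqrt π := Real.sqrt_pos.2 pi_pos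
  have h2u : 2*u ≤ Real.sqrt π * Real.exp ((4-π)/π * u^2) :=
    le_trans (key_num u) (mul_le_mul_of_nonneg_left hexp hsp.le)
  have e1 : Real.exp ((4-π)/π * u^2) * Real.exp (-(4/π) * u^2) = Real.exp (-u^2) := by
    rw [← Real.exp_add]; congr 1; field_simp; ring
  have h3 : 2*u*Real.exp (-(4/π)*u^2) ≤ Real.sqrt π * Real.exp (-u^2) := by
    calc 2*u*Real.exp (-(4/π)*u^2)
        ≤ Real.sqrt π * Real.exp ((4-π)/π * u^2) * Real.exp (-(4/π)*u^2) :=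
          mul_le_mul_of_nonneg_right h2u (Real.exp_pos _).le
      _ = Real.sqrt π * Real.exp (-u^2) := by rw [mul_assoc, e1]
  have hππ : Real.sqrt π * Real.sqrt π = π := Real.mul_self_sqrt pi_pos.le
  have hrw : Real.sqrt π / 2 * (4/π * (2*u) * Real.exp (-(4/π) * u^2) / 2)
      = 2*u*Real.exp (-(4/π)*u^2) / Real.sqrt π := by
    rw [eq_div_iff hsp.ne']
    rw [show (4:ℝ)/π = 4/(Real.sqrt π*Real.sqrt π) from by rw [hππ]]
    field_simp
    ring_nf
  rw [hrw, sub_nonpos, div_le_iff₀ hsp]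
  linarith

lemma Dnonneg (u : ℝ) : 0 ≤ Dfun u := by
  have hanti : Antitone Dfun := by
    apply antitone_of_deriv_nonpos
    · exact fun x => (Dderiv x).differentiableAt
    · intro x
      rw [(Dderiv x).deriv]
      exact Dderiv_nonpos x
  have hlim : Tendsto Dfun atTop (nhds 0) := by
    have h1 : Tendsto (fun u : ℝ => -(4/π) * u^2) atTop atBot := by
      have h4 : 0 < 4/π := by positivity
      have := (tendsto_pow_atTop (n := 2) (by norm_num)).const_mul_atTop h4
      have h2 : Tendsto (fun u : ℝ => 4/π * u^2) atTop atTop := this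
      have h3 := tendsto_neg_atTop_atBot.comp h2
      simpa [Function.comp_def, neg_mul] using h3
    have h2 : Tendsto (fun u : ℝ => Real.exp (-(4/π) * u^2)) atTop (nhds 0) :=
      Real.tendsto_exp_atBot.comp h1
    have h3 : Tendsto (fun u : ℝ => Real.sqrt π / 2 * (1 - Real.exp (-(4/π) * u^2) / 2))
        atTop (nhds (Real.sqrt π / 2 * (1 - 0 / 2))) :=
      (((h2.div_const 2).const_sub 1).const_mul _)
    have h4 := h3.sub Gtendsto
    norm_num at h4
    convert h4 using 2 with v
    unfold Dfun
    ring_nf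
  have hev : ∀ᶠ v in atTop, Dfun v ≤ Dfun u :=
    Filter.eventually_atTop.2 ⟨u, fun v hv => hanti hv⟩
  exact le_of_tendsto hlim hev

lemma Gbound (u : ℝ) :
    Gfun u ≤ Real.sqrt π / 2 - Real.sqrt π / 4 * Real.exp (-(4/π) * u^2) := by
  have := Dnonneg u
  unfold Dfun at this
  nlinarith [Real.sqrt_nonneg π]

lemma gauss_iic (ε δ t : ℝ) (hδ : 0 < δ) (ht : 0 ≤ t) :
    ∫ x in Set.Iic (ε+t), gaussianPDFReal ε ⟨δ^2, sq_nonneg δ⟩ x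
      = 1/2 + (Real.sqrt π)⁻¹ * Gfun (t/(δ*Real.sqrt 2)) := by
  set v : ℝ≥0 := ⟨δ^2, sq_nonneg δ⟩ with hvdef
  have hv : ((v : ℝ≥0) : ℝ) = δ^2 := rfl
  set C : ℝ := (Real.sqrt (2*π*δ^2))⁻¹ with hCdef
  have hpdf : ∀ x, gaussianPDFReal ε v x = C * Real.exp (-(x-ε)^2/(2*δ^2)) := by
    intro x
    rw [gaussianPDFReal, hv]
  have hInt : Integrable (gaussianPDFReal ε v) := integrable_gaussianPDFReal ε v
  have hsplit : ∫ x in Set.Iic (ε+t), gaussianPDFReal ε v x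
      = (∫ x in Set.Iic ε, gaussianPDFReal ε v x)
        + ∫ x in Set.Ioc ε (ε+t), gaussianPDFReal ε v x := by
    rw [← setIntegral_union (Set.Iic_disjoint_Ioc le_rfl) measurableSet_Ioc
      hInt.integrableOn hInt.integrableOn, Set.Iic_union_Ioc_eq_Iic (by linarith)]
  have hδ2 : (0:ℝ) < 2*δ^2 := by positivity
  have hsqrt2πδ : Real.sqrt (2*π*δ^2) = Real.sqrt 2 * Real.sqrt π * δ := by
    rw [show 2*π*δ^2 = (2*π)*δ^2 by ring, Real.sqrt_mul (by positivity),
      Real.sqrt_sq hδ.le, Real.sqrt_mul (by norm_num)]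
  have hsp : 0 < Real.sqrt π := Real.sqrt_pos.2 pi_pos
  have hs2 : 0 < Real.sqrt 2 := Real.sqrt_pos.2 (by norm_num)
  -- the half
  have hhalf : ∫ x in Set.Iic ε, gaussianPDFReal ε v x = 1/2 := by
    have A : MeasurableEmbedding (fun x : ℝ => x + ε) :=
      (Homeomorph.addRight ε).isClosedEmbedding.measurableEmbedding
    have B := A.setIntegral_map (μ := volume) (gaussianPDFReal ε v) (Set.Iic ε)
    rw [map_add_right_eq_self] at B
    have hpre : (fun x : ℝ => x + ε) ⁻¹' Set.Iic ε = Set.Iic 0 := by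
      ext x; simp
    rw [B, hpre]
    have h2 : ∀ x : ℝ, gaussianPDFReal ε v (x+ε) = C * Real.exp (-(2*δ^2)⁻¹ * x^2) := by
      intro x
      rw [hpdf]
      congr 1
      congr 1
      field_simp
      ring
    simp_rw [h2]
    rw [MeasureTheory.integral_const_mul]
    have hneg := integral_comp_neg_Iic (0:ℝ) (fun x => Real.exp (-(2*δ^2)⁻¹ * x^2))
    simp only [neg_zero, neg_sq] at hneg
    rw [hneg, show ((2*δ^2)⁻¹ : ℝ) = (2*δ^2)⁻¹ from rfl]
    have hgauss := integral_gaussian_Ioi (2*δ^2)⁻¹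
    rw [show π / (2*δ^2)⁻¹ = 2*π*δ^2 by field_simp] at hgauss
    rw [hgauss, hCdef, hsqrt2πδ]
    rw [eq_div_iff (by norm_num : (2:ℝ) ≠ 0)]
    field_simp
  -- the interval part
  have hc0 : (δ * Real.sqrt 2) ≠ 0 := by positivity
  have hc2 : (δ * Real.sqrt 2)^2 = 2*δ^2 := by
    rw [mul_pow, Real.sq_sqrt (by norm_num : (2:ℝ) ≥ 0)]; ring
  have hpart : ∫ x in Set.Ioc ε (ε+t), gaussianPDFReal ε v x
      = (Real.sqrt π)⁻¹ * Gfun (t/(δ*Real.sqrt 2)) := by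
    rw [← intervalIntegral.integral_of_le (by linarith : ε ≤ ε + t)]
    simp_rw [hpdf]
    rw [intervalIntegral.integral_const_mul]
    have hsub := intervalIntegral.integral_comp_sub_right (a := ε) (b := ε+t)
      (fun y => Real.exp (-y^2/(2*δ^2))) ε
    simp only [sub_self, add_sub_cancel_left] at hsub
    rw [hsub]
    have hint_eq : ∀ x : ℝ, Real.exp (-x^2/(2*δ^2)) = Real.exp (-(x/(δ*Real.sqrt 2))^2) := by
      intro x
      congr 1
      rw [div_pow, hc2]
      ring
    simp_rw [hint_eq]
    have hdiv := intervalIntegral.integral_comp_div (a := (0:ℝ)) (b := t)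
      (c := δ*Real.sqrt 2) (fun y => Real.exp (-y^2)) hc0
    rw [hdiv, zero_div]
    rw [smul_eq_mul, ← Gfun]
    rw [hCdef, hsqrt2πδ]
    field_simp
  rw [hsplit, hhalf, hpart]

end MaxGaussAux

theorem max_gaussian_upper_tail {Ω : Type*} [MeasureSpace Ω]
    [IsProbabilityMeasure (ℙ : Measure Ω)]
    (R : ℕ) (hR : 2 ≤ R) (ε δ : ℝ) (hδ : 0 < δ)
    (Z : Fin R → Ω → ℝ) (hmeas : ∀ i, Measurable (Z i))
    (hindep : iIndepFun Z ℙ)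
    (hgauss : ∀ i, Measure.map (Z i) ℙ = gaussianReal ε ⟨δ^2, sq_nonneg δ⟩)
    (t : ℝ) (ht : 0 < t) :
    (ℙ {ω | ∀ i, Z i ω ≤ ε + t}).toReal ≤
      Real.exp (-(R / 4) * Real.exp (-2 * t^2 / (π * δ^2))) := by
  classical
  set v : ℝ≥0 := ⟨δ^2, sq_nonneg δ⟩ with hvdef
  have hv : ((v : ℝ≥0) : ℝ) = δ^2 := rfl
  have hv0 : v ≠ 0 := by
    rw [← NNReal.coe_ne_zero, hv]
    positivity
  have hset : {ω | ∀ i, Z i ω ≤ ε + t} = ⋂ i, Z i ⁻¹' Set.Iic (ε+t) := by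
    ext ω; simp [Set.mem_iInter]
  have hprod : ℙ (⋂ i, Z i ⁻¹' Set.Iic (ε+t)) = ∏ i, ℙ (Z i ⁻¹' Set.Iic (ε+t)) :=
    hindep.meas_iInter (fun i => ⟨Set.Iic (ε+t), measurableSet_Iic, rfl⟩)
  have hmap : ∀ i : Fin R, ℙ (Z i ⁻¹' Set.Iic (ε+t)) = gaussianReal ε v (Set.Iic (ε+t)) := by
    intro i
    rw [← hgauss i, Measure.map_apply (hmeas i) measurableSet_Iic]
  set r : ℝ := (gaussianReal ε v (Set.Iic (ε+t))).toReal with hrdef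
  have hPeq : (ℙ {ω | ∀ i, Z i ω ≤ ε + t}).toReal = r ^ R := by
    rw [hset, hprod]
    simp_rw [hmap]
    rw [ENNReal.toReal_prod]
    simp [Finset.prod_const]
    rfl
  rw [hPeq]
  -- the CDF bound
  set q : ℝ := Real.exp (-2 * t^2 / (π * δ^2)) / 4 with hqdef
  have hq0 : 0 < q := by positivity
  have hq1 : q ≤ 1/4 := by
    rw [hqdef]
    have : Real.exp (-2 * t^2 / (π * δ^2)) ≤ 1 := by
      rw [Real.exp_le_one_iff]
      have : (0:ℝ) < π * δ^2 := by positivity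
      apply div_nonpos_of_nonpos_of_nonneg (by nlinarith) this.le
    linarith
  have hsp : 0 < Real.sqrt π := Real.sqrt_pos.2 Real.pi_pos
  have hrle : r ≤ 1 - q := by
    have hr_eq : r = ∫ x in Set.Iic (ε+t), gaussianPDFReal ε v x := by
      rw [hrdef, gaussianReal_apply_eq_integral ε hv0,
        ENNReal.toReal_ofReal (integral_nonneg (fun x => gaussianPDFReal_nonneg ε v x))]
    rw [hr_eq, MaxGaussAux.gauss_iic ε δ t hδ ht.le]
    set u := t/(δ*Real.sqrt 2) with hudef
    have hG := MaxGaussAux.Gbound u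
    have hc2 : (δ * Real.sqrt 2)^2 = 2*δ^2 := by
      rw [mul_pow, Real.sq_sqrt (by norm_num : (2:ℝ) ≥ 0)]; ring
    have hexp_eq : -(4/π)*u^2 = -2*t^2/(π*δ^2) := by
      rw [hudef, div_pow, hc2]
      field_simp
      ring
    have h5 : (Real.sqrt π)⁻¹ * MaxGaussAux.Gfun u
        ≤ 1/2 - Real.exp (-(4/π)*u^2)/4 := by
      have hmul := mul_le_mul_of_nonneg_left hG (inv_nonneg.2 hsp.le)
      have hinv : (Real.sqrt π)⁻¹ * Real.sqrt π = 1 := inv_mul_cancel₀ hsp.ne'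
      have expand : (Real.sqrt π)⁻¹ * (Real.sqrt π/2 - Real.sqrt π/4 * Real.exp (-(4/π)*u^2))
          = ((Real.sqrt π)⁻¹ * Real.sqrt π) * (1/2 - Real.exp (-(4/π)*u^2)/4) := by ring
      rw [expand, hinv, one_mul] at hmul
      exact hmul
    rw [hexp_eq] at h5
    rw [hqdef]
    linarith
  have hr0 : 0 ≤ r := ENNReal.toReal_nonneg
  calc r ^ R ≤ (1-q) ^ R := pow_le_pow_left₀ hr0 hrle R
    _ ≤ (Real.exp (-q)) ^ R := by
        apply pow_le_pow_left₀ (by linarith)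
        have := Real.add_one_le_exp (-q)
        linarith
    _ = Real.exp ((R:ℝ) * (-q)) := by rw [← Real.exp_nat_mul]
    _ = Real.exp (-(R / 4) * Real.exp (-2 * t^2 / (π * δ^2))) := by
        congr 1
        rw [hqdef]
        ring
end

section
/- Let Z₁, …, Z_R be iid N(ε, δ²) with ε, δ ≥ 0 and R such that log(R/(4 log R)) > 0. Set ν(R) = √((π/2)·log(R/(4 log R))). Then E[max_i Z_i²] ≥ (ε + ν(R)δ)²·(1 − 1/R), and hence E[max_i Z_i²]/E[Z₁²] ≥ (ε² + ν(R)²δ² + 2ν(R)εδ)(1 − 1/R)/(ε² + δ²). -/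
open MeasureTheory ProbabilityTheory Real
open Set
open scoped NNReal ENNReal

noncomputable def stdPdf (x : ℝ) : ℝ := gaussianPDFReal 0 1 x

lemma stdPdf_eq (x : ℝ) : stdPdf x = (Real.sqrt (2 * π))⁻¹ * Real.exp (- x^2 / 2) := by
  simp [stdPdf, gaussianPDFReal]

lemma cont_stdPdf : Continuous stdPdf := by
  simp only [funext stdPdf_eq]
  fun_prop

lemma integrable_stdPdf : Integrable stdPdf := integrable_gaussianPDFReal 0 1

noncomputable def Qg (x : ℝ) : ℝ := ∫ t in Set.Ici x, stdPdf t

lemma Qg_eq (x : ℝ) : Qg x = Qg 0 - ∫ t in (0:ℝ)..x, stdPdf t := by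
  have h1 : ∀ y : ℝ, Qg y = (∫ t, stdPdf t) - ∫ t in Iic y, stdPdf t := by
    intro y
    have := intervalIntegral.integral_Iio_add_Ici (f := stdPdf) (μ := volume) (b := y)
      integrable_stdPdf.integrableOn integrable_stdPdf.integrableOn
    rw [Qg, ← this, MeasureTheory.integral_Iic_eq_integral_Iio]
    ring
  rw [h1, h1 0, ← intervalIntegral.integral_Iic_sub_Iic integrable_stdPdf.integrableOn
    integrable_stdPdf.integrableOn]
  ring

lemma hasDerivAt_Qg (x : ℝ) : HasDerivAt Qg (-(stdPdf x)) x := by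
  have h : HasDerivAt (fun y => ∫ t in (0:ℝ)..y, stdPdf t) (stdPdf x) x :=
    (intervalIntegral.integral_hasDerivAt_right
      (integrable_stdPdf.intervalIntegrable)
      (cont_stdPdf.stronglyMeasurable.stronglyMeasurableAtFilter)
      cont_stdPdf.continuousAt)
  have h2 := (hasDerivAt_const x (Qg 0)).sub h
  rw [zero_sub] at h2
  exact (funext Qg_eq : Qg = _) ▸ h2

lemma poly_ineq {x : ℝ} (hx : 0 ≤ x) : (0.79791:ℝ)*x ≤ (1 + 0.1366*x^2/3)^3 := by
  nlinarith [sq_nonneg (x - 2.1), sq_nonneg (x^2 - 4.41), sq_nonneg x,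
    mul_nonneg hx (sq_nonneg (x-2.1)), mul_nonneg (mul_nonneg hx hx) (sq_nonneg (x-2.1)),
    mul_nonneg (mul_nonneg (mul_nonneg hx hx) hx) (sq_nonneg (x-2.1))]

lemma deriv_ineq {x : ℝ} (hx : 0 ≤ x) : x/π * Real.exp (-(2/π)*x^2) ≤ stdPdf x := by
  rw [stdPdf_eq]
  have hπ := Real.pi_gt_d6
  have hπ2 := Real.pi_lt_d6
  have hπ0 := Real.pi_pos
  set y : ℝ := (2/π - 1/2) * x^2 with hy
  have hd : (0.1366:ℝ) ≤ 2/π - 1/2 := by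
    have : (0.6366:ℝ) ≤ 2/π := by
      rw [le_div_iff₀ hπ0]; nlinarith
    linarith
  have hy0 : 0 ≤ y := by
    have h0 : (0:ℝ) ≤ 2/π - 1/2 := by linarith
    rw [hy]; positivity
  have hyl : 0.1366*x^2 ≤ y := by
    rw [hy]; exact mul_le_mul_of_nonneg_right hd (sq_nonneg x)
  have hexp : (1 + y/3)^3 ≤ Real.exp y := by
    calc (1+y/3)^3 ≤ (Real.exp (y/3))^3 := by
          apply pow_le_pow_left₀ (by linarith) (by linarith [Real.add_one_le_exp (y/3)]) 3
      _ = Real.exp y := by rw [← Real.exp_nat_mul]; congr 1; ring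
  have hpoly : (0.79791:ℝ)*x ≤ (1 + y/3)^3 :=
    (poly_ineq hx).trans (pow_le_pow_left₀ (by nlinarith) (by linarith) 3)
  have hey : (0.79791:ℝ)*x ≤ Real.exp y := hpoly.trans hexp
  have hs : Real.sqrt (2*π) ≤ 2.5067 := by
    rw [show (2.5067:ℝ) = Real.sqrt (2.5067^2) from (Real.sqrt_sq (by norm_num)).symm]
    exact Real.sqrt_le_sqrt (by nlinarith)
  have hs0 : (0:ℝ) < Real.sqrt (2*π) := Real.sqrt_pos.mpr (by linarith)
  have hsinv : (2.5067:ℝ)⁻¹ ≤ (Real.sqrt (2*π))⁻¹ := by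
    exact inv_anti₀ hs0 hs
  have key : x/π ≤ (Real.sqrt (2*π))⁻¹ * Real.exp y := by
    have h1 : x/π ≤ (2.5067:ℝ)⁻¹ * (0.79791*x) := by
      rw [div_le_iff₀ hπ0]; nlinarith
    exact h1.trans (mul_le_mul hsinv hey (by nlinarith) (by positivity))
  have key2 : x/π * Real.exp (-y) ≤ (Real.sqrt (2*π))⁻¹ := by
    have h := mul_le_mul_of_nonneg_right key (Real.exp_nonneg (-y))
    rwa [mul_assoc, ← Real.exp_add, add_neg_cancel, Real.exp_zero, mul_one] at h
  have hsplit : -(2/π)*x^2 = (-y) + (- x^2/2) := by rw [hy]; field_simp; ring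
  calc x/π * Real.exp (-(2/π)*x^2) = (x/π * Real.exp (-y)) * Real.exp (-x^2/2) := by
        rw [hsplit, Real.exp_add]; ring
    _ ≤ (Real.sqrt (2*π))⁻¹ * Real.exp (-x^2/2) :=
        mul_le_mul_of_nonneg_right key2 (Real.exp_nonneg _)

noncomputable def gfun (x : ℝ) : ℝ := Qg x - (1/4) * Real.exp (-(2/π)*x^2)

lemma hasDerivAt_gfun (x : ℝ) :
    HasDerivAt gfun (-(stdPdf x) + (x/π) * Real.exp (-(2/π)*x^2)) x := by
  have h1 : HasDerivAt (fun x : ℝ => -(2/π)*x^2) (-(2/π)*(2*x)) x := by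
    simpa using (hasDerivAt_pow 2 x).const_mul (-(2/π))
  have h2 : HasDerivAt (fun x : ℝ => (1/4) * Real.exp (-(2/π)*x^2))
      ((1/4) * (Real.exp (-(2/π)*x^2) * (-(2/π)*(2*x)))) x := (h1.exp).const_mul (1/4)
  have h3 := (hasDerivAt_Qg x).sub h2
  refine h3.congr_deriv ?_
  have hπ0 := Real.pi_pos
  ring

lemma gfun_anti : AntitoneOn gfun (Set.Ici 0) := by
  apply antitoneOn_of_deriv_nonpos (convex_Ici 0)
    (Differentiable.continuous fun x => (hasDerivAt_gfun x).differentiableAt).continuousOn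
    (fun x _ => (hasDerivAt_gfun x).differentiableAt.differentiableWithinAt)
  intro x hx
  rw [interior_Ici] at hx
  rw [(hasDerivAt_gfun x).deriv]
  have h := deriv_ineq (le_of_lt hx)
  rw [div_mul_eq_mul_div] at h
  have : x/π * Real.exp (-(2/π)*x^2) = x * Real.exp (-(2/π)*x^2) / π := by ring
  linarith [deriv_ineq (le_of_lt hx), this ▸ (le_refl (x/π * Real.exp (-(2/π)*x^2)))]

lemma tendsto_Qg_nat : Filter.Tendsto (fun n : ℕ => Qg n) Filter.atTop (nhds 0) := by
  have h := Antitone.tendsto_setIntegral (s := fun n : ℕ => Set.Ici (n:ℝ)) (f := stdPdf)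
    (μ := volume) (fun i => measurableSet_Ici)
    (fun m n hmn => Set.Ici_subset_Ici.mpr (by exact_mod_cast hmn))
    integrable_stdPdf.integrableOn
  have hempty : (⋂ n : ℕ, Set.Ici (n:ℝ)) = ∅ := by
    ext x
    simp only [Set.mem_iInter, Set.mem_Ici, Set.mem_empty_iff_false, iff_false, not_forall, not_le]
    obtain ⟨n, hn⟩ := exists_nat_gt x
    exact ⟨n, hn⟩
  rw [hempty] at h
  simpa [Qg] using h

lemma gfun_nonneg {x : ℝ} (hx : 0 ≤ x) : 0 ≤ gfun x := by
  have hsq : Filter.Tendsto (fun n : ℕ => -(2/π)*(n:ℝ)^2) Filter.atTop Filter.atBot := by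
    have h1 : Filter.Tendsto (fun n : ℕ => (2/π)*(n:ℝ)^2) Filter.atTop Filter.atTop := by
      apply Filter.Tendsto.const_mul_atTop (by positivity)
      simpa [pow_two] using tendsto_natCast_atTop_atTop.atTop_mul_atTop₀
        (tendsto_natCast_atTop_atTop (R := ℝ))
    simpa [neg_mul] using Filter.tendsto_neg_atBot_iff.mpr h1
  have h2 : Filter.Tendsto (fun n : ℕ => (1/4) * Real.exp (-(2/π)*(n:ℝ)^2))
      Filter.atTop (nhds 0) := by
    rw [show (0:ℝ) = (1/4) * 0 from by ring]
    exact (Real.tendsto_exp_atBot.comp hsq).const_mul _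
  have hlim : Filter.Tendsto (fun n : ℕ => gfun n) Filter.atTop (nhds 0) := by
    simpa [gfun, neg_mul] using (tendsto_Qg_nat.sub h2)
  refine le_of_tendsto hlim ?_
  filter_upwards [Filter.eventually_ge_atTop (Nat.ceil x)] with n hn
  have hxn : x ≤ (n:ℝ) := Nat.ceil_le.mp hn
  exact gfun_anti hx (hx.trans hxn) hxn
lemma Qg_lower {x : ℝ} (hx : 0 ≤ x) : (1/4) * Real.exp (-(2/π)*x^2) ≤ Qg x := by
  have := gfun_nonneg hx
  simp only [gfun] at this
  linarith

lemma gaussian_tail {x : ℝ} (hx : 0 ≤ x) :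
    ENNReal.ofReal ((1/4) * Real.exp (-(2/π)*x^2)) ≤ gaussianReal 0 1 (Set.Ici x) := by
  rw [gaussianReal_apply_eq_integral 0 one_ne_zero]
  exact ENNReal.ofReal_le_ofReal (Qg_lower hx)

lemma gaussian_shift {ε δ : ℝ} (hδ : 0 < δ) (ν : ℝ) :
    gaussianReal ε ⟨δ^2, sq_nonneg δ⟩ (Set.Ici (ε + ν*δ)) = gaussianReal 0 1 (Set.Ici ν) := by
  have h1 : Measure.map (fun x : ℝ => δ * x) (gaussianReal 0 1)
      = gaussianReal 0 ⟨δ^2, sq_nonneg δ⟩ := by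
    have := gaussianReal_map_const_mul (μ := 0) (v := 1) δ
    simp at this
    exact this
  have h2 : Measure.map (fun x : ℝ => δ * x + ε) (gaussianReal 0 1)
      = gaussianReal ε ⟨δ^2, sq_nonneg δ⟩ := by
    have hc : (fun x : ℝ => δ * x + ε) = (fun x : ℝ => x + ε) ∘ (fun x : ℝ => δ * x) := rfl
    rw [hc, ← Measure.map_map (by fun_prop : Measurable fun x:ℝ => x + ε)
      (by fun_prop : Measurable fun x:ℝ => δ * x), h1, gaussianReal_map_add_const (μ := 0) (v := ⟨δ^2, sq_nonneg δ⟩) ε, zero_add]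
  rw [← h2, Measure.map_apply (by fun_prop) measurableSet_Ici]
  congr 1
  ext z
  simp only [Set.mem_preimage, Set.mem_Ici]
  constructor
  · intro h; nlinarith
  · intro h; nlinarith

lemma integrable_sq_gaussian (μr : ℝ) (v : ℝ≥0) :
    Integrable (fun x : ℝ => x^2) (gaussianReal μr v) := by
  by_cases hv : v = 0
  · rw [hv, gaussianReal_zero_var]
    refine ⟨(continuous_pow 2).aestronglyMeasurable, ?_⟩
    rw [HasFiniteIntegral, lintegral_dirac' _ (by fun_prop)]
    exact ENNReal.coe_lt_top
  · rw [gaussianReal_of_var_ne_zero _ hv,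
      integrable_withDensity_iff (measurable_gaussianPDF _ _)
        (Filter.Eventually.of_forall fun x => ENNReal.ofReal_lt_top)]
    have heq : ∀ x : ℝ, x^2 * (gaussianPDF μr v x).toReal
        = (√(2 * π * v))⁻¹ * (x^2 * Real.exp (-(x - μr)^2 / (2*v))) := by
      intro x
      rw [gaussianPDF, ENNReal.toReal_ofReal (gaussianPDFReal_nonneg _ _ _), gaussianPDFReal]
      ring
    simp only [heq]
    apply Integrable.const_mul
    have hv0 : (0:ℝ) < (v:ℝ) := by
      have := lt_of_le_of_ne (zero_le : (0:ℝ≥0) ≤ v) (Ne.symm hv)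
      exact_mod_cast this
    set b : ℝ := 1/(2*(v:ℝ)) with hb_def
    have hb : (0:ℝ) < b := by positivity
    have hrpow : ∀ x : ℝ, x ^ (2:ℝ) = x^2 := fun x => by
      rw [show (2:ℝ) = ((2:ℕ):ℝ) by norm_num, Real.rpow_natCast]
    have i1 : Integrable (fun x : ℝ => x^2 * Real.exp (-b*x^2)) := by
      have := integrable_rpow_mul_exp_neg_mul_sq hb (show (-1:ℝ) < 2 by norm_num)
      simpa [hrpow] using this
    have i2 : Integrable (fun x : ℝ => x * Real.exp (-b*x^2)) :=
      integrable_mul_exp_neg_mul_sq hb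
    have i3 : Integrable (fun x : ℝ => Real.exp (-b*x^2)) := integrable_exp_neg_mul_sq hb
    have ibase : Integrable (fun x : ℝ => (x+μr)^2 * Real.exp (-b*x^2)) := by
      have := (i1.add (i2.const_mul (2*μr))).add (i3.const_mul (μr^2))
      refine this.congr (Filter.Eventually.of_forall fun x => ?_)
      simp only [Pi.add_apply]
      ring
    have ishift : Integrable (fun x : ℝ => ((x - μr)+μr)^2 * Real.exp (-b*(x-μr)^2)) :=
      ibase.comp_sub_right μr
    have : (fun x : ℝ => x^2 * Real.exp (-(x - μr)^2 / (2*(v:ℝ))))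
        = fun x : ℝ => ((x - μr)+μr)^2 * Real.exp (-b*(x-μr)^2) := by
      funext x
      rw [sub_add_cancel]
      congr 1
      rw [hb_def]
      field_simp
    rw [this]
    exact ishift

theorem expected_max_sq_gaussian {Ω : Type*} [MeasureSpace Ω]
    [IsProbabilityMeasure (ℙ : Measure Ω)]
    (R : ℕ) (hR : 2 ≤ R) (ε δ : ℝ) (hε : 0 ≤ ε) (hδ : 0 ≤ δ)
    (hlog : 0 < Real.log (R / (4 * Real.log R)))
    (Z : Fin R → Ω → ℝ) (hmeas : ∀ i, Measurable (Z i))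
    (hindep : iIndepFun Z ℙ)
    (hgauss : ∀ i, Measure.map (Z i) ℙ = gaussianReal ε ⟨δ^2, sq_nonneg δ⟩)
    (hne : (Finset.univ : Finset (Fin R)).Nonempty) :
    (ε + Real.sqrt (π / 2 * Real.log (R / (4 * Real.log R))) * δ)^2 * (1 - 1 / (R : ℝ)) ≤
        ∫ ω, Finset.univ.sup' hne (fun i => (Z i ω)^2) ∧
      (ε^2 + (π / 2 * Real.log (R / (4 * Real.log R))) * δ^2 +
          2 * Real.sqrt (π / 2 * Real.log (R / (4 * Real.log R))) * ε * δ) * (1 - 1 / (R : ℝ)) /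
          (ε^2 + δ^2) ≤
        (∫ ω, Finset.univ.sup' hne (fun i => (Z i ω)^2)) / (ε^2 + δ^2) := by
  have hπ0 := Real.pi_pos
  set L := Real.log ((R:ℝ) / (4 * Real.log R)) with hL
  set ν := Real.sqrt (π / 2 * L) with hν
  set t := ε + ν * δ with ht
  have hR0 : (0:ℝ) < R := by
    have : (2:ℝ) ≤ R := by exact_mod_cast hR
    linarith
  have hR1 : (1:ℝ) < R := by
    have : (2:ℝ) ≤ R := by exact_mod_cast hR
    linarith
  have hlogR : 0 < Real.log R := Real.log_pos hR1
  have hν0 : 0 ≤ ν := Real.sqrt_nonneg _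
  have hνsq : ν^2 = π/2 * L := Real.sq_sqrt (mul_nonneg (by positivity) hlog.le)
  have ht0 : 0 ≤ t := add_nonneg hε (mul_nonneg hν0 hδ)
  set v : ℝ≥0 := (⟨δ^2, sq_nonneg δ⟩ : ℝ≥0) with hv
  -- tail probability lower bound
  have hq : Real.log R / R ≤ (gaussianReal ε v (Set.Ici t)).toReal := by
    by_cases hδ0 : δ = 0
    · have hveq : v = 0 := by
        rw [hv]; ext; simp [hδ0]; rfl
      have htε : t = ε := by rw [ht, hδ0]; ring
      rw [hveq, gaussianReal_zero_var, htε]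
      rw [Measure.dirac_apply' _ measurableSet_Ici]
      simp only [Set.indicator_of_mem (Set.self_mem_Ici), Pi.one_apply, ENNReal.toReal_one]
      rw [div_le_one hR0]
      linarith [Real.log_le_sub_one_of_pos hR0]
    · have hδ0' : 0 < δ := lt_of_le_of_ne hδ (Ne.symm hδ0)
      have hb : (1/4) * Real.exp (-(2/π)*ν^2) = Real.log R / R := by
        rw [hνsq]
        have h1 : -(2/π) * (π/2*L) = -L := by field_simp
        rw [h1, Real.exp_neg, hL, Real.exp_log (by positivity)]
        field_simp
      have hfin : gaussianReal 0 1 (Set.Ici ν) ≠ ⊤ := measure_ne_top _ _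
      have h2 := ENNReal.toReal_mono hfin (gaussian_tail hν0)
      rw [ENNReal.toReal_ofReal (by positivity), hb] at h2
      rw [ht, hv, gaussian_shift hδ0' ν]
      exact h2
  set p := (gaussianReal ε v (Set.Iio t)).toReal with hp_def
  have hp_le : p ≤ 1 - Real.log R / R := by
    have hp1 : (gaussianReal ε v (Set.Iio t)) + (gaussianReal ε v (Set.Ici t)) = 1 := by
      have h := measure_add_measure_compl (μ := gaussianReal ε v) (measurableSet_Iio (a := t))
      rwa [Set.compl_Iio, measure_univ] at h
    have hfin1 : gaussianReal ε v (Set.Iio t) ≠ ⊤ := measure_ne_top _ _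
    have hfin2 : gaussianReal ε v (Set.Ici t) ≠ ⊤ := measure_ne_top _ _
    have h := congrArg ENNReal.toReal hp1
    rw [ENNReal.toReal_add hfin1 hfin2, ENNReal.toReal_one] at h
    rw [hp_def]
    linarith
  have hp0 : 0 ≤ p := ENNReal.toReal_nonneg
  -- the event
  set E := ⋂ i, (Z i) ⁻¹' (Set.Iio t) with hE_def
  have hEmeas : MeasurableSet E := MeasurableSet.iInter fun i => (hmeas i) measurableSet_Iio
  have hPE : ℙ E = (gaussianReal ε v (Set.Iio t)) ^ R := by
    rw [hE_def, hindep.meas_iInter (fun i => ⟨Set.Iio t, measurableSet_Iio, rfl⟩)]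
    have hc : ∀ i : Fin R, ℙ ((Z i) ⁻¹' (Set.Iio t)) = gaussianReal ε v (Set.Iio t) := by
      intro i; rw [← hgauss i, Measure.map_apply (hmeas i) measurableSet_Iio]
    rw [Finset.prod_congr rfl (fun i _ => hc i), Finset.prod_const, Finset.card_univ,
      Fintype.card_fin]
  have hlog_lt : Real.log R / R < 1 := (div_lt_one hR0).mpr (by linarith [Real.log_le_sub_one_of_pos hR0])
  have hPEled : (ℙ E).toReal ≤ 1/R := by
    rw [hPE, ENNReal.toReal_pow, ← hp_def]
    calc p ^ R ≤ (1 - Real.log R / R)^R := pow_le_pow_left₀ hp0 hp_le R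
      _ ≤ (Real.exp (-(Real.log R / R)))^R := by
          apply pow_le_pow_left₀ (by linarith)
          linarith [Real.add_one_le_exp (-(Real.log R / R))]
      _ = Real.exp (-Real.log R) := by
          rw [← Real.exp_nat_mul]; congr 1; field_simp
      _ = 1/R := by rw [Real.exp_neg, Real.exp_log hR0, one_div]
  have hPEc : 1 - 1/(R:ℝ) ≤ (ℙ Eᶜ).toReal := by
    rw [measure_compl hEmeas (measure_ne_top _ _), measure_univ,
      ENNReal.toReal_sub_of_le prob_le_one ENNReal.one_ne_top, ENNReal.toReal_one]
    linarith
  -- integrability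
  have hint_sq : ∀ i, Integrable (fun ω => (Z i ω)^2) ℙ := by
    intro i
    have h1 : Integrable (fun x : ℝ => x^2) (Measure.map (Z i) ℙ) := by
      rw [hgauss i]; exact integrable_sq_gaussian ε v
    have h2 := (integrable_map_measure ((continuous_pow 2).aestronglyMeasurable)
      (hmeas i).aemeasurable).mp h1
    exact h2
  set M := fun ω => Finset.univ.sup' hne (fun i => (Z i ω)^2) with hM
  have hM_le : ∀ ω, M ω ≤ ∑ i, (Z i ω)^2 := fun ω =>
    Finset.sup'_le hne _ (fun i _ => Finset.single_le_sum (f := fun i => (Z i ω)^2)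
      (fun j _ => sq_nonneg _) (Finset.mem_univ i))
  have hM_nonneg : ∀ ω, 0 ≤ M ω := fun ω =>
    le_trans (sq_nonneg (Z hne.choose ω))
      (Finset.le_sup' (fun i => (Z i ω)^2) (Finset.mem_univ hne.choose))
  have hM_meas : Measurable M := by
    have h := Finset.measurable_sup' hne (f := fun i ω => (Z i ω)^2)
      (fun i _ => (hmeas i).pow_const 2)
    have heq : M = Finset.univ.sup' hne (fun i ω => (Z i ω)^2) := by
      funext ω; rw [Finset.sup'_apply]
    rw [heq]; exact h
  have hM_int : Integrable M ℙ := by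
    apply Integrable.mono' (integrable_finset_sum Finset.univ (fun i _ => hint_sq i))
      hM_meas.aestronglyMeasurable
    filter_upwards with ω
    rw [Real.norm_eq_abs, abs_of_nonneg (hM_nonneg ω)]
    exact hM_le ω
  have hlower : t^2 * (1 - 1/(R:ℝ)) ≤ ∫ ω, M ω := by
    have hset : ∫ ω in Eᶜ, M ω ≤ ∫ ω, M ω :=
      setIntegral_le_integral hM_int (Filter.Eventually.of_forall hM_nonneg)
    have hmem : ∀ ω ∈ Eᶜ, t^2 ≤ M ω := by
      intro ω hω
      rw [hE_def, Set.mem_compl_iff, Set.mem_iInter] at hω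
      push_neg at hω
      obtain ⟨i, hi⟩ := hω
      have hti : t ≤ Z i ω := not_lt.mp (by simpa using hi)
      calc t^2 ≤ (Z i ω)^2 := pow_le_pow_left₀ ht0 hti 2
        _ ≤ M ω := Finset.le_sup' (fun j => (Z j ω)^2) (Finset.mem_univ i)
    have hconst : t^2 * (ℙ Eᶜ).toReal ≤ ∫ ω in Eᶜ, M ω := by
      have h1 : ∫ ω in Eᶜ, (t^2 : ℝ) ∂ℙ = (ℙ Eᶜ).toReal * t^2 := by
        rw [setIntegral_const, smul_eq_mul]; rfl
      calc t^2 * (ℙ Eᶜ).toReal = ∫ ω in Eᶜ, (t^2 : ℝ) ∂ℙ := by rw [h1]; ring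
        _ ≤ ∫ ω in Eᶜ, M ω := setIntegral_mono_on (integrable_const _).integrableOn
            hM_int.integrableOn hEmeas.compl hmem
    have h2 : t^2 * (1 - 1/(R:ℝ)) ≤ t^2 * (ℙ Eᶜ).toReal :=
      mul_le_mul_of_nonneg_left hPEc (sq_nonneg t)
    exact le_trans (le_trans h2 hconst) hset
  constructor
  · exact hlower
  · have hts : ε^2 + (π/2*L)*δ^2 + 2*ν*ε*δ = t^2 := by
      rw [ht, ← hνsq]; ring
    rw [show ε^2 + (π/2*L)*δ^2 + 2*ν*ε*δ = t^2 from hts] at *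
    by_cases h0 : ε^2 + δ^2 = 0
    · rw [h0, div_zero, div_zero]
    · have hpos : 0 < ε^2 + δ^2 := lt_of_le_of_ne (by positivity) (Ne.symm h0)
      gcongr
end

section
/- For β ∈ [0, 1), one has 1 − (1/(2√π))·∫₀^∞ exp(−y²/4)·erfc(βy/(2√(1−β²))) dy ≥ 1 − √((2 − 2β²)/(2 − β²)). -/
/-!
Bounding the tail of the Gaussian integral by `exp (-t²/2)` times the half-line Gaussian integral
gives `erfc t ≤ 2 exp (-t²/2)` for `t ≥ 0`. The integrand is then dominated by a single Gaussian
`2 exp (-c y²)` with `c = 1/4 + β² / (8 (1 - β²)) = (2 - β²) / (8 (1 - β²))`, whose integral over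
`(0, ∞)` is `√(π / c)`, and `√(π / c) / (2 √π) = √((2 - 2β²) / (2 - β²))`.
-/

open Real MeasureTheory

noncomputable def erfc (t : ℝ) : ℝ := 1 - erf t

open Set

lemma integrable_exp_neg_sq : Integrable (fun z : ℝ => exp (-z ^ 2)) := by
  simpa using integrable_exp_neg_mul_sq one_pos

lemma erfc_eq_integral_Ioi (t : ℝ) : erfc t = 2 / √π * ∫ z in Ioi t, exp (-z ^ 2) := by
  have hgauss : ∫ z in Ioi (0 : ℝ), exp (-z ^ 2) = √π / 2 := by
    simpa using integral_gaussian_Ioi 1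
  have hsplit := intervalIntegral.integral_Ioi_sub_Ioi'
    integrable_exp_neg_sq.integrableOn integrable_exp_neg_sq.integrableOn (a := 0) (b := t)
  rw [erfc, erf, ← hsplit, hgauss]
  field_simp
  ring

lemma erfc_nonneg (t : ℝ) : 0 ≤ erfc t := by
  rw [erfc_eq_integral_Ioi]
  have : 0 ≤ ∫ z in Ioi t, exp (-z ^ 2) :=
    setIntegral_nonneg measurableSet_Ioi fun _ _ => (exp_pos _).le
  positivity

lemma integral_Ioi_exp_neg_sq_le {t : ℝ} (ht : 0 ≤ t) :
    ∫ z in Ioi t, exp (-z ^ 2) ≤ exp (-t ^ 2 / 2) * (√(2 * π) / 2) := by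
  have hhalf : Integrable (fun z : ℝ => exp (-(1 / 2) * z ^ 2)) :=
    integrable_exp_neg_mul_sq one_half_pos
  calc ∫ z in Ioi t, exp (-z ^ 2)
      ≤ ∫ z in Ioi t, exp (-t ^ 2 / 2) * exp (-(1 / 2) * z ^ 2) := by
        refine setIntegral_mono_on integrable_exp_neg_sq.integrableOn
          (hhalf.const_mul _).integrableOn measurableSet_Ioi fun z hz => ?_
        rw [← exp_add]
        have : t ^ 2 ≤ z ^ 2 := pow_le_pow_left₀ ht hz.le 2
        exact exp_le_exp.mpr (by linarith)
    _ = exp (-t ^ 2 / 2) * ∫ z in Ioi t, exp (-(1 / 2) * z ^ 2) := integral_const_mul _ _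
    _ ≤ exp (-t ^ 2 / 2) * ∫ z in Ioi (0 : ℝ), exp (-(1 / 2) * z ^ 2) := by
        refine mul_le_mul_of_nonneg_left ?_ (exp_pos _).le
        exact setIntegral_mono_set hhalf.integrableOn
          (Filter.Eventually.of_forall fun _ => (exp_pos _).le) (Ioi_subset_Ioi ht).eventuallyLE
    _ = exp (-t ^ 2 / 2) * (√(2 * π) / 2) := by
        rw [integral_gaussian_Ioi, one_div, div_inv_eq_mul, mul_comm π]

lemma erfc_le_two_mul_exp {t : ℝ} (ht : 0 ≤ t) : erfc t ≤ 2 * exp (-t ^ 2 / 2) := by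
  have hsqrt2 : √2 ≤ 2 := by
    rw [sqrt_le_left zero_le_two]
    norm_num
  calc erfc t ≤ 2 / √π * (exp (-t ^ 2 / 2) * (√(2 * π) / 2)) := by
        rw [erfc_eq_integral_Ioi]
        gcongr
        exact integral_Ioi_exp_neg_sq_le ht
    _ = √2 * exp (-t ^ 2 / 2) := by
        rw [sqrt_mul zero_le_two]
        field_simp
    _ ≤ 2 * exp (-t ^ 2 / 2) := by gcongr

lemma exp_neg_mul_sq_mul_erfc_le {a y : ℝ} (ha : 0 ≤ a) (hy : 0 ≤ y) (b : ℝ) :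
    exp (-b * y ^ 2) * erfc (a * y) ≤ 2 * exp (-(b + a ^ 2 / 2) * y ^ 2) :=
  calc exp (-b * y ^ 2) * erfc (a * y) ≤ exp (-b * y ^ 2) * (2 * exp (-(a * y) ^ 2 / 2)) := by
        gcongr
        exact erfc_le_two_mul_exp (mul_nonneg ha hy)
    _ = 2 * exp (-(b + a ^ 2 / 2) * y ^ 2) := by
        rw [mul_left_comm, ← exp_add]
        ring_nf

lemma integral_exp_neg_mul_sq_mul_erfc_le {a b : ℝ} (ha : 0 ≤ a) (hb : 0 < b) :
    ∫ y in Ioi (0 : ℝ), exp (-b * y ^ 2) * erfc (a * y) ≤ √(π / (b + a ^ 2 / 2)) := by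
  have hc : 0 < b + a ^ 2 / 2 := by positivity
  calc ∫ y in Ioi (0 : ℝ), exp (-b * y ^ 2) * erfc (a * y)
      ≤ ∫ y in Ioi (0 : ℝ), 2 * exp (-(b + a ^ 2 / 2) * y ^ 2) := by
        refine integral_mono_of_nonneg ?_ ((integrable_exp_neg_mul_sq hc).const_mul 2).integrableOn
          (ae_restrict_of_forall_mem measurableSet_Ioi fun y hy => ?_)
        · exact ae_restrict_of_forall_mem measurableSet_Ioi fun y _ =>
            mul_nonneg (exp_pos _).le (erfc_nonneg _)
        · exact exp_neg_mul_sq_mul_erfc_le ha hy.le b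
    _ = √(π / (b + a ^ 2 / 2)) := by
        rw [integral_const_mul, integral_gaussian_Ioi]
        ring

theorem quadrant_prob_lower_bound (β : ℝ) (hβ0 : 0 ≤ β) (hβ1 : β < 1) :
    1 - (1 / (2 * Real.sqrt π)) *
        ∫ y in Set.Ioi (0:ℝ), Real.exp (-y^2 / 4) * erfc (β * y / (2 * Real.sqrt (1 - β^2))) ≥
      1 - Real.sqrt ((2 - 2 * β^2) / (2 - β^2)) := by
  have hβ2 : 0 < 1 - β ^ 2 := by nlinarith
  set a := β / (2 * √(1 - β ^ 2))
  have hbound := integral_exp_neg_mul_sq_mul_erfc_le (a := a) (b := 1 / 4) (by positivity)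
    (by norm_num)
  have hconst : 1 / (2 * √π) * √(π / (1 / 4 + a ^ 2 / 2)) = √((2 - 2 * β ^ 2) / (2 - β ^ 2)) := by
    rw [← sqrt_sq (by positivity : 0 ≤ 1 / (2 * √π)), ← sqrt_mul (by positivity)]
    congr 1
    rw [div_pow, mul_pow, sq_sqrt pi_pos.le, div_pow, mul_pow, sq_sqrt hβ2.le]
    have : 2 - β ^ 2 ≠ 0 := by linarith
    field_simp
    ring
  have hintegrand : (fun y => exp (-y ^ 2 / 4) * erfc (β * y / (2 * √(1 - β ^ 2)))) =
      fun y => exp (-(1 / 4) * y ^ 2) * erfc (a * y) := by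
    ext y
    congr 2
    · ring
    · exact mul_div_right_comm _ _ _
  rw [hintegrand, ge_iff_le, sub_le_sub_iff_left, ← hconst]
  gcongr
end

section
/- Under the convergence bounds GSGD: D₀²/(2ρη(1−ηL)K) + Δ/(ρ(1−ηL)) and SGD: D₀²/(2η(1−ηL)K) + ηLF*/(1−ηL) + F*, with ρ > 1, η < 1/L, and Δ > ρF*, the GSGD bound is smaller than the SGD bound for all K ≤ D₀²(ρ − 1)/(2η(Δ − ρF*)). -/
theorem gsgd_better_than_sgd_until
    (D₀ L η ρ Δ Fstar K : ℝ)
    (hD : 0 < D₀) (hL : 0 < L) (hη : 0 < η) (hηL : η < 1 / L)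
    (hρ : 1 < ρ) (hF : 0 ≤ Fstar) (hΔ : ρ * Fstar < Δ)
    (hK : 1 ≤ K) (hKle : K ≤ D₀^2 * (ρ - 1) / (2 * η * (Δ - ρ * Fstar))) :
    D₀^2 / (2 * ρ * η * (1 - η * L) * K) + Δ / (ρ * (1 - η * L)) ≤
      D₀^2 / (2 * η * (1 - η * L) * K) + η * L * Fstar / (1 - η * L) + Fstar := by
  have hc : 0 < 1 - η * L := by
    have := (lt_div_iff₀ hL).mp hηL
    linarith
  have hK0 : 0 < K := by linarith
  have hρ0 : 0 < ρ := by linarith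
  have hB : 0 < 2 * η * (Δ - ρ * Fstar) := by nlinarith
  have key : K * (2 * η * (Δ - ρ * Fstar)) ≤ D₀ ^ 2 * (ρ - 1) :=
    (le_div_iff₀ hB).mp hKle
  rw [div_add_div _ _ (by positivity) (by positivity),
      div_add_div _ _ (by positivity) (by positivity),
      div_add' _ _ _ (by positivity),
      div_le_div_iff₀ (by positivity) (by positivity)]
  nlinarith [mul_pos (mul_pos hη hc) hK0, mul_pos hρ0 hc, sq_nonneg D₀,
    mul_nonneg (mul_nonneg hη.le hc.le) hF,
    mul_le_mul_of_nonneg_left key (by positivity : (0:ℝ) ≤ η * (1 - η*L) * (1 - η*L) * ρ)]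
end
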